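/- Let S be a monoid, C an S-act, and f : A → C a homomorphism of S-acts. Then there exists a pure subact U of C with f(A) ⊆ U and |U| ≤ max{ℵ₀, |S|, |A|}; in particular f factors as A → U → C. -/

import Mathlib

universe u

open Cardinal

/-- A (finite-system component) equation over an `S`-act `B` in `n` unknowns:
`xᵢ r = xᵢ s`, `xᵢ r = xⱼ s`, or `xᵢ r = a` with `a ∈ B`. -/
inductive ActEq (S : Type u) (B : Type u) (n : ℕ) where
  | xrxs (i : Fin n) (r s : S)
  | xrys (i j : Fin n) (r s : S)
  | xra (i : Fin n) (r : S) (a : B)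

/-- An assignment `v` of the unknowns satisfies an equation. -/
def SatEq {S B : Type u} [Monoid S] [MulAction S B] {n : ℕ} (v : Fin n → B) :
    ActEq S B n → Prop
  | .xrxs i r s => r • v i = s • v i
  | .xrys i j r s => r • v i = s • v j
  | .xra i r a => r • v i = a

/-- The constants of the equation lie in the subset `U`. -/
def ConstIn {S B : Type u} (U : Set B) {n : ℕ} : ActEq S B n → Prop
  | .xra _ _ a => a ∈ U
  | _ => True

/-- `U` is a pure subset of the `S`-act `B`: every finite system of equations with
constants from `U` that is solvable in `B` is solvable in `U`. -/
def IsPure (S : Type u) {B : Type u} [Monoid S] [MulAction S B] (U : Set B) : Prop :=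
  ∀ (n : ℕ) (E : List (ActEq S B n)), (∀ e ∈ E, ConstIn U e) →
    (∃ v : Fin n → B, ∀ e ∈ E, SatEq v e) →
    ∃ v : Fin n → B, (∀ i, v i ∈ U) ∧ ∀ e ∈ E, SatEq v e

/-- `φ : A → C` is a `𝒞`-preenvelope of `A`. -/
def IsPreenvelope {S : Type u} [Monoid S] (𝒞 : (C : Type u) → [MulAction S C] → Prop)
    (A : Type u) [MulAction S A] (C : Type u) [MulAction S C] (φ : A →[S] C) : Prop :=
  𝒞 C ∧ ∀ (C' : Type u) [MulAction S C'], 𝒞 C' →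
    ∀ f : A →[S] C', ∃ g : C →[S] C', ∀ a, g (φ a) = f a

/-- `A` has a `𝒞`-preenvelope. -/
def HasPreenvelope {S : Type u} [Monoid S] (𝒞 : (C : Type u) → [MulAction S C] → Prop)
    (A : Type u) [MulAction S A] : Prop :=
  ∃ (C : Type u) (inst : MulAction S C), letI := inst
    ∃ φ : A →[S] C, IsPreenvelope 𝒞 A C φ

/-- An injective `S`-act: maps into it extend along all embeddings of acts. -/
def IsInjectiveAct (S : Type u) [Monoid S] (E : Type u) [MulAction S E] : Prop :=
  ∀ (A B : Type u) [MulAction S A] [MulAction S B] (i : A →[S] B),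
    Function.Injective i → ∀ f : A →[S] E, ∃ g : B →[S] E, ∀ a, g (i a) = f a

/-- `A` is absolutely pure: it is pure in every act containing it. -/
def IsAbsolutelyPure (S : Type u) [Monoid S] (A : Type u) [MulAction S A] : Prop :=
  ∀ (B : Type u) [MulAction S B] (i : A →[S] B), Function.Injective i →
    IsPure S (Set.range i)

/-- The right ideal of `S` generated by a set `F` (in the act convention `s • t = s * t`). -/
def genIdeal {S : Type u} [Monoid S] (F : Set S) : Set S :=
  {x | ∃ s : S, ∃ f ∈ F, x = s * f}

theorem genIdeal_smul {S : Type u} [Monoid S] (F : Set S) (s : S) {x : S}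
    (hx : x ∈ genIdeal F) : s * x ∈ genIdeal F := by
  obtain ⟨t, f, hf, rfl⟩ := hx; exact ⟨s * t, f, hf, (mul_assoc s t f).symm⟩

/-- A map `h` defined on an ideal `I ⊆ S` extends to an act map `S → A`. -/
def ExtendsHom {S : Type u} [Monoid S] {A : Type u} [MulAction S A] (I : Set S)
    (h : I → A) : Prop :=
  ∃ g : S → A, (∀ s t : S, g (s * t) = s • g t) ∧ ∀ x : I, g x = h x

/-- `A` is weakly f-injective: homs from finitely generated right ideals extend to `S`. -/
def IsWeaklyFInjective (S : Type u) [Monoid S] (A : Type u) [MulAction S A] : Prop :=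
  ∀ (F : Finset S) (h : genIdeal (F : Set S) → A),
    (∀ (s : S) (x : genIdeal (F : Set S)),
      h ⟨s * ↑x, genIdeal_smul _ s x.2⟩ = s • h x) →
    ExtendsHom (genIdeal (F : Set S)) h

/-- `A` is weakly p-injective: homs from principal right ideals extend to `S`. -/
def IsWeaklyPInjective (S : Type u) [Monoid S] (A : Type u) [MulAction S A] : Prop :=
  ∀ (t : S) (h : genIdeal {t} → A),
    (∀ (s : S) (x : genIdeal {t}),
      h ⟨s * ↑x, genIdeal_smul _ s x.2⟩ = s • h x) →
    ExtendsHom (genIdeal {t}) h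

/-! Löwenheim–Skolem closure: starting from `B = f(A)`, repeatedly adjoin one chosen solution of
every finite system with constants in the current set that is solvable in `C`, and close under the
action of `S`. Over a set `U` there are at most `max ℵ₀ |S| |U|` such systems, so all countably many
stages stay within the bound, and the union is pure because the finitely many constants of any
system already lie in a single stage. -/

universe v

open Pointwise

theorem Cardinal.sum_le_lift_of_le {ι : Type v} {f : ι → Cardinal.{u}} {k : Cardinal.{u}}
    (hk : ℵ₀ ≤ k) (hι : lift.{u} #ι ≤ lift.{v} k) (hf : ∀ i, f i ≤ k) :
    sum f ≤ lift.{v} k :=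
  calc sum f ≤ sum fun _ : ι => k := sum_le_sum _ _ hf
    _ = lift.{u} #ι * lift.{v} k := sum_const _ _
    _ ≤ lift.{v} k := mul_le_of_le (by simpa using hk) hι le_rfl

theorem Cardinal.mk_iUnion_le_of_le {α : Type u} {ι : Type v} {f : ι → Set α}
    {k : Cardinal.{u}} (hk : ℵ₀ ≤ k) (hι : lift.{u} #ι ≤ lift.{v} k) (hf : ∀ i, #(f i) ≤ k) :
    #(⋃ i, f i) ≤ k :=
  lift_le.1 (mk_iUnion_le_sum_mk_lift.trans (sum_le_lift_of_le hk hι hf))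

namespace ActEq

variable {S B B' : Type u} {n : ℕ}

def map (g : B → B') : ActEq S B n → ActEq S B' n
  | .xrxs i r s => .xrxs i r s
  | .xrys i j r s => .xrys i j r s
  | .xra i r a => .xra i r (g a)

instance canLift (U : Set B) : CanLift (ActEq S B n) (ActEq S U n) (map (↑)) (ConstIn U) where
  prf
    | .xrxs i r s, _ => ⟨.xrxs i r s, rfl⟩
    | .xrys i j r s, _ => ⟨.xrys i j r s, rfl⟩
    | .xra i r a, ha => ⟨.xra i r ⟨a, ha⟩, rfl⟩

theorem mk_le_of_le {k : Cardinal.{u}} (hk : ℵ₀ ≤ k) (hS : #S ≤ k) (hB : #B ≤ k) :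
    #(ActEq S B n) ≤ k := by
  let enc : (Fin n × S × S) ⊕ (Fin n × Fin n × S × S) ⊕ (Fin n × S × B) → ActEq S B n
    | .inl (i, r, s) => .xrxs i r s
    | .inr (.inl (i, j, r, s)) => .xrys i j r s
    | .inr (.inr (i, r, a)) => .xra i r a
  have henc : Function.Surjective enc := by
    rintro (⟨i, r, s⟩ | ⟨i, j, r, s⟩ | ⟨i, r, a⟩)
    exacts [⟨.inl (i, r, s), rfl⟩, ⟨.inr (.inl (i, j, r, s)), rfl⟩, ⟨.inr (.inr (i, r, a)), rfl⟩]
  have hn : (n : Cardinal) ≤ k := natCast_lt_aleph0.le.trans hk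
  refine (mk_le_of_surjective henc).trans ?_
  simp only [mk_sum, mk_prod, mk_fin, lift_id, lift_uzero, lift_natCast]
  repeat' first | apply add_le_of_le hk | apply mul_le_of_le hk | assumption

end ActEq

theorem ConstIn.eventually_of_iUnion {S B : Type u} {U : ℕ → Set B} (hU : Monotone U) {n : ℕ}
    {e : ActEq S B n} (he : ConstIn (⋃ N, U N) e) : ∀ᶠ N in Filter.atTop, ConstIn (U N) e := by
  cases e with
  | xra i r a =>
    obtain ⟨N, hN⟩ := Set.mem_iUnion.1 he
    exact Filter.eventually_atTop.2 ⟨N, fun M hM => hU hM hN⟩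
  | _ => exact Filter.Eventually.of_forall fun _ => trivial

section PureHull

variable {S C : Type u} [Monoid S] [MulAction S C]

variable (S) in
def solvableSystems (U : Set C) : Set (Σ n, List (ActEq S C n)) :=
  {p | (∀ e ∈ p.2, ConstIn U e) ∧ ∃ v : Fin p.1 → C, ∀ e ∈ p.2, SatEq v e}

theorem mk_solvableSystems_le {U : Set C} {k : Cardinal.{u}} (hk : ℵ₀ ≤ k) (hS : #S ≤ k)
    (hU : #U ≤ k) : #(solvableSystems S U) ≤ k := by
  have hsub : solvableSystems S U ⊆
      Set.range fun p : Σ n, List (ActEq S U n) => ⟨p.1, p.2.map (ActEq.map (↑))⟩ := by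
    rintro ⟨n, E⟩ ⟨hE, -⟩
    lift E to List (ActEq S U n) using hE
    exact ⟨⟨n, E⟩, rfl⟩
  refine (mk_le_mk_of_subset hsub).trans (mk_range_le.trans ?_)
  rw [mk_sigma, ← lift_uzero k]
  refine sum_le_lift_of_le hk (by simpa using hk) fun n => ?_
  exact (mk_list_le_max _).trans (max_le hk (ActEq.mk_le_of_le hk hS hU))

variable (S) in
noncomputable def solutionSet (U : Set C) : Set C :=
  ⋃ p : solvableSystems S U, Set.range p.2.2.choose

theorem exists_solution_mem_solutionSet {U : Set C} {n : ℕ} {E : List (ActEq S C n)}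
    (hE : ∀ e ∈ E, ConstIn U e) (hsol : ∃ v : Fin n → C, ∀ e ∈ E, SatEq v e) :
    ∃ v : Fin n → C, (∀ i, v i ∈ solutionSet S U) ∧ ∀ e ∈ E, SatEq v e :=
  let p : solvableSystems S U := ⟨⟨n, E⟩, hE, hsol⟩
  ⟨p.2.2.choose, fun i => Set.mem_iUnion.2 ⟨p, i, rfl⟩, p.2.2.choose_spec⟩

theorem mk_solutionSet_le {U : Set C} {k : Cardinal.{u}} (hk : ℵ₀ ≤ k) (hS : #S ≤ k)
    (hU : #U ≤ k) : #(solutionSet S U) ≤ k :=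
  mk_iUnion_le_of_le hk (by simpa using mk_solvableSystems_le hk hS hU) fun _ =>
    ((Set.finite_range _).lt_aleph0.le.trans hk)

variable (S) in
def pureStep (U : Set C) : Set C :=
  (Set.univ : Set S) • (U ∪ solutionSet S U)

theorem subset_pureStep (U : Set C) : U ∪ solutionSet S U ⊆ pureStep S U := fun c hc =>
  one_smul S c ▸ Set.smul_mem_smul (Set.mem_univ 1) hc

theorem smul_mem_pureStep {U : Set C} (s : S) {c : C} (hc : c ∈ pureStep S U) :
    s • c ∈ pureStep S U := by
  obtain ⟨t, -, x, hx, rfl⟩ := hc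
  exact smul_smul s t x ▸ Set.smul_mem_smul (Set.mem_univ _) hx

theorem mk_pureStep_le {U : Set C} {k : Cardinal.{u}} (hk : ℵ₀ ≤ k) (hS : #S ≤ k)
    (hU : #U ≤ k) : #(pureStep S U) ≤ k :=
  calc #(pureStep S U) ≤ #(Set.univ : Set S) * #(U ∪ solutionSet S U : Set C) := by
        rw [pureStep, ← Set.image2_smul]; exact mk_image2_le
    _ ≤ k := mul_le_of_le hk (mk_univ.trans_le hS) <|
        (mk_union_le _ _).trans (add_le_of_le hk hU (mk_solutionSet_le hk hS hU))

variable (S) in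
def pureHull (B : Set C) : Set C :=
  ⋃ n : ℕ, (pureStep S)^[n] B

theorem monotone_iterate_pureStep (B : Set C) : Monotone fun n => (pureStep S)^[n] B :=
  monotone_nat_of_le_succ fun n => by
    rw [Function.iterate_succ_apply']
    exact Set.subset_union_left.trans (subset_pureStep _)

theorem iterate_pureStep_subset_pureHull (B : Set C) (n : ℕ) :
    (pureStep S)^[n] B ⊆ pureHull S B :=
  Set.subset_iUnion (fun n => (pureStep S)^[n] B) n

theorem isPure_pureHull (B : Set C) : IsPure S (pureHull S B) := by
  intro n E hE hsol
  have hstage : ∀ᶠ N in Filter.atTop, ∀ e ∈ E, ConstIn ((pureStep S)^[N] B) e :=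
    (Filter.eventually_all_finite E.finite_toSet).2 fun e he =>
      ConstIn.eventually_of_iUnion (monotone_iterate_pureStep B) (hE e he)
  obtain ⟨N, hN⟩ := hstage.exists
  obtain ⟨v, hv, hvE⟩ := exists_solution_mem_solutionSet hN hsol
  refine ⟨v, fun i => iterate_pureStep_subset_pureHull B (N + 1) ?_, hvE⟩
  rw [Function.iterate_succ_apply']
  exact subset_pureStep _ (Or.inr (hv i))

theorem smul_mem_pureHull (B : Set C) (s : S) {c : C} (hc : c ∈ pureHull S B) :
    s • c ∈ pureHull S B := by
  obtain ⟨N, hN⟩ := Set.mem_iUnion.1 hc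
  refine iterate_pureStep_subset_pureHull B (N + 1) ?_
  rw [Function.iterate_succ_apply']
  exact smul_mem_pureStep s (subset_pureStep _ (Or.inl hN))

theorem mk_pureHull_le (B : Set C) : #(pureHull S B) ≤ max (max ℵ₀ #S) #B := by
  set k := max (max ℵ₀ #S) #B
  have hk : ℵ₀ ≤ k := le_max_of_le_left (le_max_left _ _)
  have hS : #S ≤ k := le_max_of_le_left (le_max_right _ _)
  have hstage : ∀ n, #((pureStep S)^[n] B) ≤ k := fun n => by
    induction n with
    | zero => exact le_max_right _ _
    | succ n ih => rw [Function.iterate_succ_apply']; exact mk_pureStep_le hk hS ih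
  exact mk_iUnion_le_of_le hk (by simpa using hk) hstage

theorem exists_isPure_superset (B : Set C) :
    ∃ U : SubMulAction S C, IsPure S (U : Set C) ∧ B ⊆ U ∧ #U ≤ max (max ℵ₀ #S) #B :=
  ⟨⟨pureHull S B, smul_mem_pureHull B⟩, isPure_pureHull B,
    iterate_pureStep_subset_pureHull B 0, mk_pureHull_le B⟩

end PureHull

/-- any map `f : A → C` factors through a pure subact `U` of `C` with
`|U| ≤ max {ℵ₀, |S|, |A|}`. -/
theorem factor_through_pure {S A C : Type u} [Monoid S] [MulAction S A] [MulAction S C]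
    (f : A →[S] C) :
    ∃ U : SubMulAction S C, IsPure S (U : Set C) ∧ Set.range f ⊆ (U : Set C) ∧
      #U ≤ max (max ℵ₀ #S) #A ∧
      ∃ g : A → U, ∀ a, (g a : C) = f a := by
  obtain ⟨U, hpure, hfU, hcard⟩ := exists_isPure_superset (S := S) (Set.range f)
  exact ⟨U, hpure, hfU, hcard.trans (max_le_max_left _ mk_range_le),
    fun a => ⟨f a, hfU ⟨a, rfl⟩⟩, fun _ => rfl⟩
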